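/- arXiv:1809.04618 — 4 statements merged into one kernel-verified Lean document; each statement's English description precedes it below -/
import Mathlib

section
/- Suppose f : ℝ^d → ℝ is continuously differentiable, (m,b)-dissipative (i.e. ⟨x, ∇f(x)⟩ ≥ m‖x‖² - b for all x), and f(x) ≥ 0 for all x. Then for all x ∈ ℝ^d, f(x) ≥ (m/3)‖x‖² - (b/2)·log 3. -/
/-!
On the ray `t ↦ t • x`, dissipativity reads `t ⟪x, ∇f(t x)⟫ ≥ m t² ‖x‖² - b`, i.e. the function
`t ↦ f (t x) - (m/2) t² ‖x‖² + b log t` is nondecreasing on `t > 0`. Comparing `t = 1/√3` with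
`t = 1` and dropping `f ((1/√3) x) ≥ 0` gives the bound.
-/

open scoped RealInnerProductSpace

open Set Real

section Dissipative

variable {E : Type*} [NormedAddCommGroup E] [InnerProductSpace ℝ E] [CompleteSpace E]

theorem hasDerivAt_comp_smul_const {f : E → ℝ} {x : E} {t : ℝ}
    (hf : DifferentiableAt ℝ f (t • x)) :
    HasDerivAt (fun s : ℝ => f (s • x)) ⟪x, gradient f (t • x)⟫ t := by
  have hline : HasDerivAt (fun s : ℝ => s • x) x t := by
    simpa using (hasDerivAt_id t).smul_const x
  have h := hf.hasGradientAt.hasFDerivAt.comp_hasDerivAt t hline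
  rwa [InnerProductSpace.toDual_apply_apply, real_inner_comm] at h

theorem monotoneOn_radial_of_dissipative {f : E → ℝ} {m b : ℝ} (hf : Differentiable ℝ f)
    (hdiss : ∀ y : E, m * ‖y‖ ^ 2 - b ≤ ⟪y, gradient f y⟫) (x : E) :
    MonotoneOn (fun t : ℝ => f (t • x) - m / 2 * t ^ 2 * ‖x‖ ^ 2 + b * log t) (Ioi 0) := by
  have hderiv : ∀ t ∈ Ioi (0 : ℝ), HasDerivAt
      (fun t : ℝ => f (t • x) - m / 2 * t ^ 2 * ‖x‖ ^ 2 + b * log t)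
      (⟪x, gradient f (t • x)⟫ - m / 2 * (2 * t) * ‖x‖ ^ 2 + b * t⁻¹) t := fun t ht => by
    have hsq : HasDerivAt (fun t : ℝ => t ^ 2) (2 * t) t := by
      simpa using hasDerivAt_pow 2 t
    exact ((hasDerivAt_comp_smul_const (hf _)).sub
      ((hsq.const_mul (m / 2)).mul_const _)).add ((hasDerivAt_log ht.ne').const_mul b)
  refine monotoneOn_of_hasDerivWithinAt_nonneg (convex_Ioi 0)
    (f' := fun t => ⟪x, gradient f (t • x)⟫ - m / 2 * (2 * t) * ‖x‖ ^ 2 + b * t⁻¹)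
    (fun t ht => (hderiv t ht).continuousAt.continuousWithinAt) (fun t ht => ?_) fun t ht => ?_
  · rw [interior_Ioi] at ht ⊢
    exact (hderiv t ht).hasDerivWithinAt
  rw [interior_Ioi, mem_Ioi] at ht
  have hray := hdiss (t • x)
  rw [inner_smul_left, norm_smul, Real.norm_eq_abs, mul_pow, sq_abs] at hray
  simp only [RCLike.conj_to_real] at hray
  have hscaled : 0 ≤ t * (⟪x, gradient f (t • x)⟫ - m / 2 * (2 * t) * ‖x‖ ^ 2 + b * t⁻¹) := by
    have hb : t * (b * t⁻¹) = b := by field_simp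
    rw [mul_add, mul_sub, hb]
    linarith
  exact nonneg_of_mul_nonneg_right (by linarith) ht

theorem le_sub_apply_smul_of_dissipative {f : E → ℝ} {m b : ℝ} (hf : Differentiable ℝ f)
    (hdiss : ∀ y : E, m * ‖y‖ ^ 2 - b ≤ ⟪y, gradient f y⟫) (x : E) {c : ℝ} (hc : 0 < c)
    (hc1 : c ≤ 1) :
    m / 2 * (1 - c ^ 2) * ‖x‖ ^ 2 + b * log c ≤ f x - f (c • x) := by
  have h := monotoneOn_radial_of_dissipative hf hdiss x hc (lt_of_lt_of_le hc hc1 : (0:ℝ) < 1) hc1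
  simp only [one_smul, one_pow, log_one, mul_zero, add_zero] at h
  linarith

end Dissipative

theorem stmt3_general {d : ℕ} (f : EuclideanSpace ℝ (Fin d) → ℝ)
    (m b : ℝ)
    (hf : ContDiff ℝ 1 f) (hpos : ∀ x, 0 ≤ f x)
    (hdiss : ∀ x : EuclideanSpace ℝ (Fin d), m * ‖x‖ ^ 2 - b ≤ ⟪x, gradient f x⟫) :
    ∀ x : EuclideanSpace ℝ (Fin d), m / 3 * ‖x‖ ^ 2 - b / 2 * Real.log 3 ≤ f x := by
  intro x
  have hsqrt3 : 1 ≤ √3 := by rw [one_le_sqrt]; norm_num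
  have hsq : (√3)⁻¹ ^ 2 = 1 / 3 := by rw [inv_pow, sq_sqrt (by norm_num)]; norm_num
  have hlog : log (√3)⁻¹ = -(log 3 / 2) := by rw [log_inv, log_sqrt (by norm_num)]
  have h := le_sub_apply_smul_of_dissipative (hf.differentiable one_ne_zero) hdiss x
    (inv_pos.2 (by linarith)) (inv_le_one_of_one_le₀ hsqrt3)
  rw [hsq, hlog] at h
  linarith [hpos ((√3)⁻¹ • x)]

theorem stmt3 {d : ℕ} (f : EuclideanSpace ℝ (Fin d) → ℝ)
    (m b : ℝ) (hm : 0 < m) (hb : 0 ≤ b)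
    (hf : ContDiff ℝ 1 f) (hpos : ∀ x, 0 ≤ f x)
    (hdiss : ∀ x : EuclideanSpace ℝ (Fin d), m * ‖x‖ ^ 2 - b ≤ ⟪x, gradient f x⟫) :
    ∀ x : EuclideanSpace ℝ (Fin d), m / 3 * ‖x‖ ^ 2 - b / 2 * Real.log 3 ≤ f x :=
  stmt3_general f m b hf hpos hdiss
end

section
/- Let 𝒱(x,v) = β F(x) + (β/4)γ²(‖x + γ⁻¹v‖² + ‖γ⁻¹v‖² - λ‖x‖²) with F ≥ 0, β, γ > 0, 0 < λ ≤ 1/4. Then the gradient in v satisfies ∇_v 𝒱(x,v) = βv + (βγ/2)x, and ‖∇_v 𝒱(x,v)‖² ≤ (12β/(1-2λ)) · 𝒱(x,v) for all (x,v). -/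
/-!
The velocity gradient of `𝒱` is computed from `∇_w ‖x + s w‖² = 2s (x + s w)`. For the bound,
`‖βv + (βγ/2)x‖² ≤ 2β²‖v‖² + (β²γ²/2)‖x‖²`, and each of the two terms is controlled by `𝒱` through
the coercivity estimates `𝒱 ≥ (1/8)(1-2λ)βγ²‖x‖²` and `𝒱 ≥ (β/4)(1-2λ)‖v‖²`, which both come from
`‖x‖² ≤ 2(‖x + y‖² + ‖y‖²)`; the constants add up to `8 + 4 = 12`.
-/

section Coercivity

variable {E : Type*} [SeminormedAddCommGroup E]

theorem norm_add_sq_le_two_mul (a b : E) : ‖a + b‖ ^ 2 ≤ 2 * (‖a‖ ^ 2 + ‖b‖ ^ 2) :=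
  (pow_le_pow_left₀ (norm_nonneg _) (norm_add_le a b) 2).trans add_sq_le

/-- The quadratic part of `𝒱`, with `y = γ⁻¹ v`. -/
def lyapunovQuadratic (lam : ℝ) (x y : E) : ℝ :=
  ‖x + y‖ ^ 2 + ‖y‖ ^ 2 - lam * ‖x‖ ^ 2

theorem norm_sq_le_two_mul_norm_add_sq_add (x y : E) : ‖x‖ ^ 2 ≤ 2 * (‖x + y‖ ^ 2 + ‖y‖ ^ 2) := by
  simpa using norm_add_sq_le_two_mul (x + y) (-y)

theorem lyapunovQuadratic_ge_left (lam : ℝ) (x y : E) :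
    (1 - 2 * lam) / 2 * ‖x‖ ^ 2 ≤ lyapunovQuadratic lam x y := by
  unfold lyapunovQuadratic
  linarith [norm_sq_le_two_mul_norm_add_sq_add x y]

theorem lyapunovQuadratic_ge_right {lam : ℝ} (hlam0 : 0 ≤ lam) (hlam : lam ≤ 1 / 2) (x y : E) :
    (1 - 2 * lam) * ‖y‖ ^ 2 ≤ lyapunovQuadratic lam x y := by
  unfold lyapunovQuadratic
  nlinarith [mul_le_mul_of_nonneg_left (norm_sq_le_two_mul_norm_add_sq_add x y) hlam0,
    mul_nonneg (sub_nonneg.mpr hlam) (sq_nonneg ‖x + y‖)]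

variable [NormedSpace ℝ E] {β γ lam f : ℝ}

theorem mul_norm_sq_le_lyapunov_of_position (hβ : 0 ≤ β) (hf : 0 ≤ f) (x v : E) :
    (1 - 2 * lam) * β * γ ^ 2 / 8 * ‖x‖ ^ 2 ≤
      β * f + β / 4 * γ ^ 2 * lyapunovQuadratic lam x (γ⁻¹ • v) :=
  calc (1 - 2 * lam) * β * γ ^ 2 / 8 * ‖x‖ ^ 2
      = β / 4 * γ ^ 2 * ((1 - 2 * lam) / 2 * ‖x‖ ^ 2) := by ring
    _ ≤ β / 4 * γ ^ 2 * lyapunovQuadratic lam x (γ⁻¹ • v) := by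
        gcongr
        exact lyapunovQuadratic_ge_left lam x _
    _ ≤ _ := le_add_of_nonneg_left (mul_nonneg hβ hf)

theorem mul_norm_sq_le_lyapunov_of_velocity (hβ : 0 ≤ β) (hf : 0 ≤ f) (hγ : γ ≠ 0)
    (hlam0 : 0 ≤ lam) (hlam : lam ≤ 1 / 2) (x v : E) :
    (1 - 2 * lam) * β / 4 * ‖v‖ ^ 2 ≤
      β * f + β / 4 * γ ^ 2 * lyapunovQuadratic lam x (γ⁻¹ • v) :=
  calc (1 - 2 * lam) * β / 4 * ‖v‖ ^ 2
      = β / 4 * γ ^ 2 * ((1 - 2 * lam) * ‖γ⁻¹ • v‖ ^ 2) := by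
        rw [norm_smul, mul_pow, norm_inv, Real.norm_eq_abs, inv_pow, sq_abs]
        field_simp
    _ ≤ β / 4 * γ ^ 2 * lyapunovQuadratic lam x (γ⁻¹ • v) := by
        gcongr
        exact lyapunovQuadratic_ge_right hlam0 hlam x _
    _ ≤ _ := le_add_of_nonneg_left (mul_nonneg hβ hf)

theorem norm_smul_add_smul_sq_le_lyapunov (hβ : 0 < β) (hf : 0 ≤ f) (hγ : γ ≠ 0)
    (hlam0 : 0 ≤ lam) (hlam : lam < 1 / 2) (x v : E) :
    ‖β • v + (β * γ / 2) • x‖ ^ 2 ≤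
      12 * β / (1 - 2 * lam) * (β * f + β / 4 * γ ^ 2 * lyapunovQuadratic lam x (γ⁻¹ • v)) := by
  set W := β * f + β / 4 * γ ^ 2 * lyapunovQuadratic lam x (γ⁻¹ • v)
  have hWx := mul_norm_sq_le_lyapunov_of_position (lam := lam) (γ := γ) hβ.le hf x v
  have hWv := mul_norm_sq_le_lyapunov_of_velocity hβ.le hf hγ hlam0 hlam.le x v
  rw [div_mul_eq_mul_div, le_div_iff₀ (by linarith)]
  calc ‖β • v + (β * γ / 2) • x‖ ^ 2 * (1 - 2 * lam)
      ≤ 2 * (‖β • v‖ ^ 2 + ‖(β * γ / 2) • x‖ ^ 2) * (1 - 2 * lam) := by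
        gcongr
        · linarith
        · exact norm_add_sq_le_two_mul _ _
    _ = 8 * β * ((1 - 2 * lam) * β / 4 * ‖v‖ ^ 2)
          + 4 * β * ((1 - 2 * lam) * β * γ ^ 2 / 8 * ‖x‖ ^ 2) := by
        simp only [norm_smul, mul_pow, Real.norm_eq_abs, sq_abs]
        ring
    _ ≤ 8 * β * W + 4 * β * W := by gcongr
    _ = 12 * β * W := by ring

end Coercivity

section Gradient

variable {E : Type*} [NormedAddCommGroup E] [InnerProductSpace ℝ E] [CompleteSpace E]

theorem hasGradientAt_norm_add_smul_sq (x v : E) (s : ℝ) :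
    HasGradientAt (fun w => ‖x + s • w‖ ^ 2) ((2 * s) • (x + s • v)) v := by
  have h : HasFDerivAt (fun w => x + s • w) (s • ContinuousLinearMap.id ℝ E) v :=
    ((hasFDerivAt_id v).const_smul s).const_add x
  refine hasGradientAt_iff_hasFDerivAt.mpr (h.norm_sq.congr_fderiv ?_)
  ext w
  simp only [map_smul, map_add, ContinuousLinearMap.comp_smulₛₗ, ContinuousLinearMap.comp_id,
    add_apply, smul_apply, coe_innerSL_apply,
    InnerProductSpace.toDual_apply_apply, smul_eq_mul, nsmul_eq_mul, Real.ringHom_apply]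
  ring

theorem hasGradientAt_add_mul_lyapunovQuadratic (c β lam : ℝ) {γ : ℝ} (hγ : γ ≠ 0) (x v : E) :
    HasGradientAt (fun w => c + β / 4 * γ ^ 2 * lyapunovQuadratic lam x (γ⁻¹ • w))
      (β • v + (β * γ / 2) • x) v := by
  have h₁ := hasGradientAt_iff_hasFDerivAt.mp (hasGradientAt_norm_add_smul_sq x v γ⁻¹)
  have h₂ := hasGradientAt_iff_hasFDerivAt.mp (hasGradientAt_norm_add_smul_sq 0 v γ⁻¹)
  simp only [zero_add] at h₂
  refine hasGradientAt_iff_hasFDerivAt.mpr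
    ((((h₁.add h₂).sub_const _).const_mul (β / 4 * γ ^ 2)).const_add c |>.congr_fderiv ?_)
  rw [← map_add, ← map_smul]
  congr 1
  match_scalars <;> field_simp <;> ring

end Gradient

theorem stmt6_general {d : ℕ} (F : EuclideanSpace ℝ (Fin d) → ℝ)
    (β γ lam : ℝ) (hβ : 0 < β) (hγ : 0 < γ) (hlam0 : 0 < lam) (hlam : lam ≤ 1/4)
    (hFpos : ∀ x, 0 ≤ F x)
    (V : EuclideanSpace ℝ (Fin d) → EuclideanSpace ℝ (Fin d) → ℝ)
    (hV : ∀ x v, V x v = β * F x +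
      β / 4 * γ ^ 2 * (‖x + γ⁻¹ • v‖ ^ 2 + ‖γ⁻¹ • v‖ ^ 2 - lam * ‖x‖ ^ 2)) :
    ∀ x v : EuclideanSpace ℝ (Fin d),
      gradient (fun w => V x w) v = β • v + (β * γ / 2) • x ∧
      ‖gradient (fun w => V x w) v‖ ^ 2 ≤ 12 * β / (1 - 2 * lam) * V x v := by
  intro x v
  have hgrad : gradient (fun w => V x w) v = β • v + (β * γ / 2) • x := by
    have hVfun : (fun w => V x w) =
        fun w => β * F x + β / 4 * γ ^ 2 * lyapunovQuadratic lam x (γ⁻¹ • w) := funext (hV x)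
    rw [hVfun]
    exact (hasGradientAt_add_mul_lyapunovQuadratic _ β lam hγ.ne' x v).gradient
  refine ⟨hgrad, ?_⟩
  rw [hgrad, hV x v]
  exact norm_smul_add_smul_sq_le_lyapunov hβ (hFpos x) hγ.ne' hlam0.le (by linarith) x v

theorem stmt6 {d : ℕ} (F : EuclideanSpace ℝ (Fin d) → ℝ)
    (β γ lam : ℝ) (hβ : 0 < β) (hγ : 0 < γ) (hlam0 : 0 < lam) (hlam : lam ≤ 1/4)
    (hF : ContDiff ℝ 1 F) (hFpos : ∀ x, 0 ≤ F x)
    (V : EuclideanSpace ℝ (Fin d) → EuclideanSpace ℝ (Fin d) → ℝ)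
    (hV : ∀ x v, V x v = β * F x +
      β / 4 * γ ^ 2 * (‖x + γ⁻¹ • v‖ ^ 2 + ‖γ⁻¹ • v‖ ^ 2 - lam * ‖x‖ ^ 2)) :
    ∀ x v : EuclideanSpace ℝ (Fin d),
      gradient (fun w => V x w) v = β • v + (β * γ / 2) • x ∧
      ‖gradient (fun w => V x w) v‖ ^ 2 ≤ 12 * β / (1 - 2 * lam) * V x v :=
  stmt6_general F β γ lam hβ hγ hlam0 hlam hFpos V hV
end

section
/- Let 𝒱(x,v) = β F(x) + (β/4)γ²(‖x + γ⁻¹v‖² + ‖γ⁻¹v‖² - λ‖x‖²) with F ≥ 0, β, γ > 0, 0 < λ ≤ 1/4. Then ‖(x,v)‖² ≤ [16/((1-2λ)βγ²) + 8/(β(1-2λ))] · 𝒱(x,v) for all (x,v) ∈ ℝ^{2d}, where ‖(x,v)‖² = ‖x‖² + ‖v‖². -/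
lemma key7 (a b c β γ lam F0 : ℝ)
    (hc : (a - b)^2 ≤ c^2) (hβ : 0 < β) (hγ : 0 < γ)
    (hl0 : 0 < lam) (hl : lam ≤ 1/4) (hF : 0 ≤ F0) :
    a^2 + (γ*b)^2 ≤ (16/((1-2*lam)*β*γ^2) + 8/(β*(1-2*lam))) *
      (β*F0 + β/4*γ^2*(c^2 + b^2 - lam*a^2)) := by
  have h1 : 0 < 1 - 2*lam := by linarith
  have hW1 : (1-2*lam)*a^2 ≤ 4*(c^2 + b^2 - lam*a^2) := by
    nlinarith [sq_nonneg (5*a - 8*b)]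
  have hW2 : (1-2*lam)*b^2 ≤ 2*(c^2 + b^2 - lam*a^2) := by
    nlinarith [sq_nonneg (2*a - 3*b), sq_nonneg (a - b)]
  rw [div_add_div _ _ (by positivity) (by positivity), div_mul_eq_mul_div,
    le_div_iff₀ (by positivity)]
  have hγ2 : 0 < γ^2 := by positivity
  nlinarith [mul_le_mul_of_nonneg_left hW1
      (le_of_lt (mul_pos (mul_pos hβ hβ) (mul_pos h1 hγ2))),
    mul_le_mul_of_nonneg_left hW2
      (le_of_lt (mul_pos (mul_pos (mul_pos hβ hβ) h1) (mul_pos hγ2 hγ2))),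
    mul_nonneg (mul_nonneg hβ.le hF) (mul_nonneg (mul_nonneg hβ.le h1.le) hγ2.le)]

theorem stmt7 {d : ℕ} (F : EuclideanSpace ℝ (Fin d) → ℝ)
    (β γ lam : ℝ) (hβ : 0 < β) (hγ : 0 < γ) (hlam0 : 0 < lam) (hlam : lam ≤ 1/4)
    (hF : ∀ x, 0 ≤ F x)
    (V : EuclideanSpace ℝ (Fin d) → EuclideanSpace ℝ (Fin d) → ℝ)
    (hV : ∀ x v, V x v = β * F x +
      β / 4 * γ ^ 2 * (‖x + γ⁻¹ • v‖ ^ 2 + ‖γ⁻¹ • v‖ ^ 2 - lam * ‖x‖ ^ 2)) :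
    ∀ x v : EuclideanSpace ℝ (Fin d),
      ‖x‖ ^ 2 + ‖v‖ ^ 2 ≤
        (16 / ((1 - 2 * lam) * β * γ ^ 2) + 8 / (β * (1 - 2 * lam))) * V x v := by
  intro x v
  set u := γ⁻¹ • v with hu
  have hbv : ‖v‖ = γ * ‖u‖ := by
    rw [hu, norm_smul, norm_inv, Real.norm_eq_abs, abs_of_pos hγ]
    field_simp
  have h1 : ‖x‖ ≤ ‖x + u‖ + ‖u‖ := by
    calc ‖x‖ = ‖(x + u) - u‖ := by rw [add_sub_cancel_right]
    _ ≤ ‖x + u‖ + ‖u‖ := norm_sub_le _ _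
  have h2 : ‖u‖ ≤ ‖x + u‖ + ‖x‖ := by
    calc ‖u‖ = ‖(x + u) - x‖ := by rw [add_sub_cancel_left]
    _ ≤ ‖x + u‖ + ‖x‖ := norm_sub_le _ _
  have hc : (‖x‖ - ‖u‖)^2 ≤ ‖x + u‖^2 := by nlinarith [norm_nonneg (x + u)]
  rw [hV x v, hbv]
  exact key7 ‖x‖ ‖u‖ ‖x + u‖ β γ lam (F x) hc hβ hγ hlam0 hlam (hF x)
end

section
/- Let (L_k)_{k≥0} be nonnegative reals satisfying (L_{k+1} - L_k)/η ≤ γ(c - λ L_k) + (K₁ L_k + K₂)·η for all k, where γ, λ, c, K₁, K₂, η > 0. If η ≤ min{γc/K₂, γλ/(2K₁)}, then (L_{k+1} - L_k)/η ≤ 2γc - (γλ/2)L_k, and consequently L_k ≤ L_0 + 4c/λ for all k. -/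
theorem stmt10 (γ lam c K₁ K₂ η : ℝ)
    (hγ : 0 < γ) (hlam : 0 < lam) (hc : 0 < c) (hK₁ : 0 < K₁) (hK₂ : 0 < K₂)
    (hη : 0 < η) (hη1 : η ≤ min (γ * c / K₂) (γ * lam / (2 * K₁)))
    (hη2 : η * γ * lam / 2 < 1)
    (L : ℕ → ℝ) (hL : ∀ k, 0 ≤ L k)
    (hrec : ∀ k, (L (k + 1) - L k) / η ≤ γ * (c - lam * L k) + (K₁ * L k + K₂) * η) :
    (∀ k, (L (k + 1) - L k) / η ≤ 2 * γ * c - γ * lam / 2 * L k) ∧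
    (∀ k, L k ≤ L 0 + 4 * c / lam) := by
  have h1 : η ≤ γ * c / K₂ := le_trans hη1 (min_le_left _ _)
  have h2 : η ≤ γ * lam / (2 * K₁) := le_trans hη1 (min_le_right _ _)
  have hK2η : K₂ * η ≤ γ * c := by
    rw [le_div_iff₀ hK₂] at h1; linarith
  have hK1η : K₁ * η ≤ γ * lam / 2 := by
    rw [le_div_iff₀ (by positivity)] at h2; nlinarith
  have main : ∀ k, (L (k + 1) - L k) / η ≤ 2 * γ * c - γ * lam / 2 * L k := by
    intro k
    have := hrec k
    have hLk := hL k
    nlinarith [mul_le_mul_of_nonneg_right hK1η hLk]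
  refine ⟨main, ?_⟩
  have key : ∀ k, L k ≤ L 0 + 4 * c / lam := by
    intro k
    induction k with
    | zero =>
      have h0 : 0 < 4 * c / lam := by positivity
      linarith
    | succ n ih =>
      have h := main n
      rw [div_le_iff₀ hη] at h
      have ha : 0 < η * γ * lam / 2 := by positivity
      have h4 : 0 ≤ L 0 := hL 0
      have hcc : 2 * η * γ * c = (η * γ * lam / 2) * (4 * c / lam) := by
        field_simp; ring
      nlinarith [mul_le_mul_of_nonneg_left ih (le_of_lt ha), hη2, hL n]
  exact key
end
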